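/- arXiv:0804.1733 — 3 statements merged into one kernel-verified Lean document; each statement's English description precedes it below -/
import Mathlib

section
/- Let X be a Banach A-bimodule with ann X = {0}. If X̃ is a Banach A-bimodule and j : X → X̃ is a bounded injective A-bimodule homomorphism such that A·X̃ + X̃·A ⊆ j(X), then there exists a bounded A-bimodule homomorphism j̃ : X̃ → Δ(X) with ι_X = j̃ ∘ j; explicitly, for x̃ ∈ X̃, j̃(x̃) = (S, T) where S = j⁻¹ ∘ (a ↦ x̃·a) and T = j⁻¹ ∘ (a ↦ a·x̃) are bounded linear maps forming a double centralizer. -/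
noncomputable section

/-- A Banach `A`-bimodule structure on a Banach space `X`: bounded bilinear left and right
actions (encoded as continuous linear maps `l`, `r`, where `l a x = a·x` and `r a x = x·a`)
satisfying `(ab)·x = a·(b·x)`, `x·(ab) = (x·a)·b` and `(a·x)·b = a·(x·b)`. -/
structure BanachBimodule (A X : Type*) [NonUnitalNormedRing A] [NormedSpace ℂ A]
    [NormedAddCommGroup X] [NormedSpace ℂ X] where
  l : A →L[ℂ] X →L[ℂ] X
  r : A →L[ℂ] X →L[ℂ] X
  l_mul : ∀ a b x, l (a * b) x = l a (l b x)
  r_mul : ∀ a b x, r (a * b) x = r b (r a x)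
  l_r : ∀ a b x, r b (l a x) = l a (r b x)

variable {A X : Type*} [NonUnitalNormedRing A] [NormedSpace ℂ A]
  [IsScalarTower ℂ A A] [SMulCommClass ℂ A A] [CompleteSpace A]
  [NormedAddCommGroup X] [NormedSpace ℂ X] [CompleteSpace X]

/-- `(S, T)` is a double centralizer from `A` into `X`:
`S(αa) = S(α)·a`, `T(aα) = a·T(α)` and `a·S(α) = T(a)·α`. -/
def IsDoubleCentralizer (M : BanachBimodule A X) (S T : A →L[ℂ] X) : Prop :=
  (∀ α a : A, S (α * a) = M.r a (S α)) ∧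
  (∀ a α : A, T (a * α) = M.l a (T α)) ∧
  (∀ a α : A, M.l a (S α) = M.r α (T a))

/-- The canonical bounded linear map `ι_X : x ↦ (L_x, R_x)` where `L_x a = x·a`,
`R_x a = a·x`. -/
def iotaDC (M : BanachBimodule A X) : X →L[ℂ] (A →L[ℂ] X) × (A →L[ℂ] X) :=
  M.r.flip.prod M.l.flip

/-- The left action `a·(S, T) = (α ↦ a·S(α), α ↦ T(αa))` on pairs. -/
def dcSmulLeft (M : BanachBimodule A X) (a : A) (p : (A →L[ℂ] X) × (A →L[ℂ] X)) :
    (A →L[ℂ] X) × (A →L[ℂ] X) :=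
  ((M.l a).comp p.1, p.2.comp ((ContinuousLinearMap.mul ℂ A).flip a))

/-- The right action `(S, T)·a = (α ↦ S(aα), α ↦ T(α)·a)` on pairs. -/
def dcSmulRight (M : BanachBimodule A X) (p : (A →L[ℂ] X) × (A →L[ℂ] X)) (a : A) :
    (A →L[ℂ] X) × (A →L[ℂ] X) :=
  (p.1.comp (ContinuousLinearMap.mul ℂ A a), (M.r a).comp p.2)

/-!
The maps `a ↦ x̃·a` and `a ↦ a·x̃` take values in `j(X)`, so they can be pulled back along the
injective `j`; the pullback of a bounded linear map is linear, and bounded by the closed graph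
theorem, its graph being the preimage of a closed set under `(e, x) ↦ (e, j x)`. The same pullback,
applied to postcomposition with `j` on pairs of operators, makes `x̃ ↦ (S, T)` bounded. Every
algebraic identity required of `(S, T)` and of `j̃` becomes, after applying the injective `j`,
a bimodule axiom of `X̃`.
-/

theorem ContinuousLinearMap.exists_comp_eq_of_range_subset {𝕜 E F G : Type*}
    [NontriviallyNormedField 𝕜] [NormedAddCommGroup E] [NormedSpace 𝕜 E] [CompleteSpace E]
    [NormedAddCommGroup F] [NormedSpace 𝕜 F] [CompleteSpace F]
    [AddCommGroup G] [Module 𝕜 G] [TopologicalSpace G] [T2Space G]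
    (j : F →L[𝕜] G) (hj : Function.Injective j) (f : E →L[𝕜] G)
    (hf : Set.range f ⊆ Set.range j) : ∃ g : E →L[𝕜] F, j.comp g = f := by
  let g : E →ₗ[𝕜] F := (LinearEquiv.ofInjective (j : F →ₗ[𝕜] G) hj).symm.toLinearMap ∘ₗ
    (f : E →ₗ[𝕜] G).codRestrict _ fun e => hf ⟨e, rfl⟩
  have hjg : ∀ e, j (g e) = f e := fun e => LinearEquiv.ofInjective_symm_apply (h := hj) _ _
  have hgraph : (g.graph : Set (E × F)) = {p | j p.2 = f p.1} := by
    ext p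
    simp only [SetLike.mem_coe, LinearMap.mem_graph_iff, Set.mem_ofPred_eq, ← hjg, hj.eq_iff]
  have hg : Continuous g := g.continuous_of_isClosed_graph <| by
    rw [hgraph]
    exact isClosed_eq (j.continuous.comp continuous_snd) (f.continuous.comp continuous_fst)
  exact ⟨⟨g, hg⟩, ContinuousLinearMap.ext hjg⟩

theorem ContinuousLinearMap.prod_ext_of_injective_comp {𝕜 E F G : Type*}
    [NontriviallyNormedField 𝕜] [NormedAddCommGroup E] [NormedSpace 𝕜 E]
    [NormedAddCommGroup F] [NormedSpace 𝕜 F] [NormedAddCommGroup G] [NormedSpace 𝕜 G]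
    {j : F →L[𝕜] G} (hj : Function.Injective j) {p q : (E →L[𝕜] F) × (E →L[𝕜] F)}
    (h₁ : ∀ e, j (p.1 e) = j (q.1 e)) (h₂ : ∀ e, j (p.2 e) = j (q.2 e)) : p = q :=
  Prod.ext (ContinuousLinearMap.ext fun e => hj (h₁ e))
    (ContinuousLinearMap.ext fun e => hj (h₂ e))

theorem exists_lift_iotaDC {A X Y : Type*} [NonUnitalNormedRing A] [NormedSpace ℂ A]
    [CompleteSpace A] [NormedAddCommGroup X] [NormedSpace ℂ X] [CompleteSpace X]
    [NormedAddCommGroup Y] [NormedSpace ℂ Y] [CompleteSpace Y]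
    (N : BanachBimodule A Y) {j : X →L[ℂ] Y} (hj : Function.Injective j)
    (hrange : ∀ (a : A) (y : Y), N.l a y ∈ Set.range j ∧ N.r a y ∈ Set.range j) :
    ∃ jt : Y →L[ℂ] (A →L[ℂ] X) × (A →L[ℂ] X),
      ∀ (y : Y) (a : A), j ((jt y).1 a) = N.r a y ∧ j ((jt y).2 a) = N.l a y := by
  let J := (ContinuousLinearMap.compL ℂ A X Y j).prodMap (ContinuousLinearMap.compL ℂ A X Y j)
  have hJ : Function.Injective J := fun p q hpq =>
    ContinuousLinearMap.prod_ext_of_injective_comp hj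
      (fun a => congr($hpq.1 a)) (fun a => congr($hpq.2 a))
  have hrangeJ : Set.range (iotaDC N) ⊆ Set.range J := by
    rintro _ ⟨y, rfl⟩
    obtain ⟨S, hS⟩ := j.exists_comp_eq_of_range_subset hj (N.r.flip y)
      (by rintro _ ⟨a, rfl⟩; exact (hrange a y).2)
    obtain ⟨T, hT⟩ := j.exists_comp_eq_of_range_subset hj (N.l.flip y)
      (by rintro _ ⟨a, rfl⟩; exact (hrange a y).1)
    exact ⟨(S, T), Prod.ext hS hT⟩
  obtain ⟨jt, hjt⟩ := J.exists_comp_eq_of_range_subset hJ (iotaDC N) hrangeJ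
  exact ⟨jt, fun y a => ⟨congr(($hjt y).1 a), congr(($hjt y).2 a)⟩⟩

theorem statement9_general (M : BanachBimodule A X)
    {Y : Type*} [NormedAddCommGroup Y] [NormedSpace ℂ Y] [CompleteSpace Y]
    (N : BanachBimodule A Y) (j : X →L[ℂ] Y)
    (hinj : Function.Injective j)
    (hjl : ∀ (a : A) (x : X), j (M.l a x) = N.l a (j x))
    (hjr : ∀ (a : A) (x : X), j (M.r a x) = N.r a (j x))
    (hrange : ∀ (a : A) (y : Y), N.l a y ∈ Set.range j ∧ N.r a y ∈ Set.range j) :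
    ∃ jt : Y →L[ℂ] (A →L[ℂ] X) × (A →L[ℂ] X),
      (∀ y : Y, IsDoubleCentralizer M (jt y).1 (jt y).2) ∧
      (∀ (y : Y) (a : A), j ((jt y).1 a) = N.r a y ∧ j ((jt y).2 a) = N.l a y) ∧
      (∀ (a : A) (y : Y), jt (N.l a y) = dcSmulLeft M a (jt y) ∧
        jt (N.r a y) = dcSmulRight M (jt y) a) ∧
      (∀ x : X, jt (j x) = iotaDC M x) := by
  obtain ⟨jt, hjt⟩ := exists_lift_iotaDC N hinj hrange
  have hS y a : j ((jt y).1 a) = N.r a y := (hjt y a).1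
  have hT y a : j ((jt y).2 a) = N.l a y := (hjt y a).2
  refine ⟨jt, fun y => ⟨fun α a => hinj ?_, fun a α => hinj ?_, fun a α => hinj ?_⟩, hjt,
    fun a y => ⟨?_, ?_⟩, fun x => ?_⟩
  · rw [hjr, hS, hS, N.r_mul]
  · rw [hjl, hT, hT, N.l_mul]
  · rw [hjl, hjr, hS, hT, N.l_r]
  all_goals refine ContinuousLinearMap.prod_ext_of_injective_comp hinj (fun α => ?_) (fun α => ?_)
  all_goals simp [dcSmulLeft, dcSmulRight, iotaDC, hS, hT, hjl, hjr, N.l_r, N.l_mul, N.r_mul]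

/-- Universal property (existence): if `ann X = {0}`, `j : X → X̃` is a bounded injective
`A`-bimodule homomorphism and `A·X̃ + X̃·A ⊆ j(X)`, then there is a bounded `A`-bimodule
homomorphism `j̃ : X̃ → Δ(X)` with `ι_X = j̃ ∘ j`; explicitly `j(j̃(x̃).1 a) = x̃·a` and
`j(j̃(x̃).2 a) = a·x̃`. -/
theorem statement9 (M : BanachBimodule A X)
    (hann : ∀ x : X, (∀ a : A, M.l a x = 0 ∧ M.r a x = 0) → x = 0)
    {Y : Type*} [NormedAddCommGroup Y] [NormedSpace ℂ Y] [CompleteSpace Y]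
    (N : BanachBimodule A Y) (j : X →L[ℂ] Y)
    (hinj : Function.Injective j)
    (hjl : ∀ (a : A) (x : X), j (M.l a x) = N.l a (j x))
    (hjr : ∀ (a : A) (x : X), j (M.r a x) = N.r a (j x))
    (hrange : ∀ (a : A) (y : Y), N.l a y ∈ Set.range j ∧ N.r a y ∈ Set.range j) :
    ∃ jt : Y →L[ℂ] (A →L[ℂ] X) × (A →L[ℂ] X),
      (∀ y : Y, IsDoubleCentralizer M (jt y).1 (jt y).2) ∧
      (∀ (y : Y) (a : A), j ((jt y).1 a) = N.r a y ∧ j ((jt y).2 a) = N.l a y) ∧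
      (∀ (a : A) (y : Y), jt (N.l a y) = dcSmulLeft M a (jt y) ∧
        jt (N.r a y) = dcSmulRight M (jt y) a) ∧
      (∀ x : X, jt (j x) = iotaDC M x) :=
  statement9_general M N j hinj hjl hjr hrange
end
end

section
/- Let X be a Banach A-bimodule with ann X = {0}, let X̃ be a Banach A-bimodule and j : X → X̃ a bounded injective A-bimodule homomorphism with A·X̃ + X̃·A ⊆ j(X). If j̃₁, j̃₂ : X̃ → Δ(X) are bounded A-bimodule homomorphisms with j̃₁ ∘ j = ι_X = j̃₂ ∘ j, then j̃₁ = j̃₂. (Uniqueness of the universal map in the universal property of (ι_X, Δ(X)).) -/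
/-!
Both maps agree with `ι_X` on `j(X) ⊇ A·X̃ + X̃·A`, so for every `y` the double centralizers
`j̃₁ y` and `j̃₂ y` have the same products with every `a ∈ A` on both sides. Comparing first
components, `a·S₁(α) = a·S₂(α)` and `S₁(α)·a = S₁(αa) = S₂(αa) = S₂(α)·a`, so `S₁(α) - S₂(α)`
lies in `ann X = {0}`; symmetrically `T₁ = T₂`.
-/

noncomputable section

variable {A X : Type*} [NonUnitalNormedRing A] [NormedSpace ℂ A]
  [IsScalarTower ℂ A A] [SMulCommClass ℂ A A] [CompleteSpace A]
  [NormedAddCommGroup X] [NormedSpace ℂ X] [CompleteSpace X]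

theorem IsDoubleCentralizer.eq_of_smul_eq (M : BanachBimodule A X)
    (hann : ∀ x : X, (∀ a : A, M.l a x = 0 ∧ M.r a x = 0) → x = 0)
    {p q : (A →L[ℂ] X) × (A →L[ℂ] X)}
    (hp : IsDoubleCentralizer M p.1 p.2) (hq : IsDoubleCentralizer M q.1 q.2)
    (hleft : ∀ a, dcSmulLeft M a p = dcSmulLeft M a q)
    (hright : ∀ a, dcSmulRight M p a = dcSmulRight M q a) : p = q := by
  obtain ⟨hpS, hpT, -⟩ := hp
  obtain ⟨hqS, hqT, -⟩ := hq
  have eq_of_actions_eq : ∀ {x x' : X}, (∀ a, M.l a x = M.l a x') → (∀ a, M.r a x = M.r a x') →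
      x = x' := fun hl hr =>
    sub_eq_zero.mp <| hann _ fun a => by simp only [map_sub, hl, hr, sub_self, and_self]
  refine Prod.ext (ContinuousLinearMap.ext fun α => ?_) (ContinuousLinearMap.ext fun α => ?_)
  · refine eq_of_actions_eq (fun a => ?_) (fun a => ?_)
    · exact congr($(hleft a).1 α)
    · rw [← hpS, ← hqS]
      exact congr($(hright α).1 a)
  · refine eq_of_actions_eq (fun a => ?_) (fun a => ?_)
    · rw [← hpT, ← hqT]
      exact congr($(hleft α).2 a)
    · exact congr($(hright a).2 α)

theorem statement10_general (M : BanachBimodule A X)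
    (hann : ∀ x : X, (∀ a : A, M.l a x = 0 ∧ M.r a x = 0) → x = 0)
    {Y : Type*} [NormedAddCommGroup Y] [NormedSpace ℂ Y]
    (N : BanachBimodule A Y) (j : X →L[ℂ] Y)
    (hrange : ∀ (a : A) (y : Y), N.l a y ∈ Set.range j ∧ N.r a y ∈ Set.range j)
    (jt₁ jt₂ : Y →L[ℂ] (A →L[ℂ] X) × (A →L[ℂ] X))
    (hdc₁ : ∀ y : Y, IsDoubleCentralizer M (jt₁ y).1 (jt₁ y).2)
    (hdc₂ : ∀ y : Y, IsDoubleCentralizer M (jt₂ y).1 (jt₂ y).2)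
    (hhom₁ : ∀ (a : A) (y : Y), jt₁ (N.l a y) = dcSmulLeft M a (jt₁ y) ∧
      jt₁ (N.r a y) = dcSmulRight M (jt₁ y) a)
    (hhom₂ : ∀ (a : A) (y : Y), jt₂ (N.l a y) = dcSmulLeft M a (jt₂ y) ∧
      jt₂ (N.r a y) = dcSmulRight M (jt₂ y) a)
    (hcomm₁ : ∀ x : X, jt₁ (j x) = iotaDC M x)
    (hcomm₂ : ∀ x : X, jt₂ (j x) = iotaDC M x) :
    jt₁ = jt₂ := by
  have agree_on_range : ∀ y ∈ Set.range j, jt₁ y = jt₂ y := by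
    rintro _ ⟨x, rfl⟩
    rw [hcomm₁, hcomm₂]
  ext1 y
  refine IsDoubleCentralizer.eq_of_smul_eq M hann (hdc₁ y) (hdc₂ y) (fun a => ?_) (fun a => ?_)
  · rw [← (hhom₁ a y).1, ← (hhom₂ a y).1]
    exact agree_on_range _ (hrange a y).1
  · rw [← (hhom₁ a y).2, ← (hhom₂ a y).2]
    exact agree_on_range _ (hrange a y).2

/-- Universal property (uniqueness): if `ann X = {0}`, `j : X → X̃` is a bounded injective
`A`-bimodule homomorphism with `A·X̃ + X̃·A ⊆ j(X)`, and `j̃₁, j̃₂ : X̃ → Δ(X)` are bounded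
`A`-bimodule homomorphisms with `j̃₁ ∘ j = ι_X = j̃₂ ∘ j`, then `j̃₁ = j̃₂`. -/
theorem statement10 (M : BanachBimodule A X)
    (hann : ∀ x : X, (∀ a : A, M.l a x = 0 ∧ M.r a x = 0) → x = 0)
    {Y : Type*} [NormedAddCommGroup Y] [NormedSpace ℂ Y] [CompleteSpace Y]
    (N : BanachBimodule A Y) (j : X →L[ℂ] Y)
    (hinj : Function.Injective j)
    (hjl : ∀ (a : A) (x : X), j (M.l a x) = N.l a (j x))
    (hjr : ∀ (a : A) (x : X), j (M.r a x) = N.r a (j x))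
    (hrange : ∀ (a : A) (y : Y), N.l a y ∈ Set.range j ∧ N.r a y ∈ Set.range j)
    (jt₁ jt₂ : Y →L[ℂ] (A →L[ℂ] X) × (A →L[ℂ] X))
    (hdc₁ : ∀ y : Y, IsDoubleCentralizer M (jt₁ y).1 (jt₁ y).2)
    (hdc₂ : ∀ y : Y, IsDoubleCentralizer M (jt₂ y).1 (jt₂ y).2)
    (hhom₁ : ∀ (a : A) (y : Y), jt₁ (N.l a y) = dcSmulLeft M a (jt₁ y) ∧
      jt₁ (N.r a y) = dcSmulRight M (jt₁ y) a)
    (hhom₂ : ∀ (a : A) (y : Y), jt₂ (N.l a y) = dcSmulLeft M a (jt₂ y) ∧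
      jt₂ (N.r a y) = dcSmulRight M (jt₂ y) a)
    (hcomm₁ : ∀ x : X, jt₁ (j x) = iotaDC M x)
    (hcomm₂ : ∀ x : X, jt₂ (j x) = iotaDC M x) :
    jt₁ = jt₂ :=
  statement10_general M hann N j hrange jt₁ jt₂ hdc₁ hdc₂ hhom₁ hhom₂ hcomm₁ hcomm₂
end
end

section
/- Let A be a Banach algebra with a bounded approximate identity and let X be a neounital Banach A-bimodule, i.e. every x ∈ X can be written as x = a·y·c with a, c ∈ A and y ∈ X. Then the canonical map ι_{X*} : X* → Δ(X*) into the double centralizers from A into the dual bimodule X* is a topological isomorphism of Banach A-bimodules. -/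
/-!
The approximate identity acts as a left unit on the neounital module: `e_i·x → x`. Hence
`φ x = lim φ(e_i·x) = lim (ι φ).1 (e_i) x`, which bounds `‖φ‖` by `C ‖ι φ‖`, `C` a bound for the
`e_i`; injectivity follows. For a double centralizer `(S, T)`, the identity `S(e_i)(a·y) = S(e_i a)(y)` shows that the
functionals `S(e_i)` converge pointwise; being uniformly bounded, their limit is a bounded
functional `φ`, and the centralizer identities pass to the limit to give `ι φ = (S, T)`.
-/

noncomputable section

variable {A X : Type*} [NonUnitalNormedRing A] [NormedSpace ℂ A]
  [IsScalarTower ℂ A A] [SMulCommClass ℂ A A] [CompleteSpace A]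
  [NormedAddCommGroup X] [NormedSpace ℂ X] [CompleteSpace X]

/-- The dual Banach `A`-bimodule `X*` of `X`, with actions `(a·φ)(x) = φ(x·a)` and
`(φ·a)(x) = φ(a·x)`. -/
def BanachBimodule.dual (M : BanachBimodule A X) : BanachBimodule A (X →L[ℂ] ℂ) where
  l := (ContinuousLinearMap.compL ℂ X X ℂ).flip.comp M.r
  r := (ContinuousLinearMap.compL ℂ X X ℂ).flip.comp M.l
  l_mul := by
    intro a b φ
    ext x
    simp [M.r_mul]
  r_mul := by
    intro a b φ
    ext x
    simp [M.l_mul]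
  l_r := by
    intro a b φ
    ext x
    simp [M.l_r]

/-- A bounded approximate identity for `A`. -/
def HasBAI (A : Type*) [NonUnitalNormedRing A] [NormedSpace ℂ A] : Prop :=
  ∃ (ι : Type) (p : Filter ι) (e : ι → A), p.NeBot ∧ (∃ C : ℝ, ∀ i, ‖e i‖ ≤ C) ∧
    ∀ a : A, Filter.Tendsto (fun i => e i * a) p (nhds a) ∧
      Filter.Tendsto (fun i => a * e i) p (nhds a)


open Filter Topology

namespace BanachBimodule

omit [CompleteSpace A] [CompleteSpace X]

variable (M : BanachBimodule A X)

theorem iotaDC_l (a : A) (x : X) :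
    iotaDC M (M.l a x) = dcSmulLeft M a (iotaDC M x) := by
  ext α <;> simp [iotaDC, dcSmulLeft, M.l_r, M.l_mul]

theorem iotaDC_r (a : A) (x : X) :
    iotaDC M (M.r a x) = dcSmulRight M (iotaDC M x) a := by
  ext α <;> simp [iotaDC, dcSmulRight, M.l_r, M.r_mul]

omit [IsScalarTower ℂ A A] [SMulCommClass ℂ A A]

variable {ι : Type*} {p : Filter ι} {e : ι → A}

theorem tendsto_l_apply (he : ∀ a, Tendsto (fun i => e i * a) p (𝓝 a))
    (hM : ∀ x : X, ∃ (a : A) (y : X), x = M.l a y) (x : X) :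
    Tendsto (fun i => M.l (e i) x) p (𝓝 x) := by
  obtain ⟨a, y, rfl⟩ := hM x
  simpa only [← M.l_mul, Function.comp_def, ContinuousLinearMap.flip_apply] using
    ((M.l.flip y).continuous.tendsto a).comp (he a)

theorem norm_le_mul_norm_iotaDC_dual {C : ℝ} [p.NeBot] (hC : ∀ i, ‖e i‖ ≤ C)
    (hX : ∀ x, Tendsto (fun i => M.l (e i) x) p (𝓝 x)) (φ : X →L[ℂ] ℂ) :
    ‖φ‖ ≤ C * ‖iotaDC M.dual φ‖ := by
  have hC0 : 0 ≤ C := (norm_nonneg _).trans (hC (p.nonempty_of_neBot.some))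
  refine φ.opNorm_le_bound (by positivity) fun x => ?_
  refine le_of_tendsto ((φ.continuous.tendsto x).comp (hX x)).norm
    (Eventually.of_forall fun i => ?_)
  calc ‖φ (M.l (e i) x)‖ = ‖(iotaDC M.dual φ).1 (e i) x‖ := rfl
    _ ≤ ‖(iotaDC M.dual φ).1‖ * ‖e i‖ * ‖x‖ := ContinuousLinearMap.le_opNorm₂ _ _ _
    _ ≤ ‖iotaDC M.dual φ‖ * C * ‖x‖ := by gcongr; exacts [norm_fst_le _, hC i]
    _ = C * ‖iotaDC M.dual φ‖ * ‖x‖ := by ring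

section DoubleCentralizer

variable {M} {S T : A →L[ℂ] (X →L[ℂ] ℂ)} (h : IsDoubleCentralizer M.dual S T)
include h

theorem _root_.IsDoubleCentralizer.tendsto_dual_apply_l
    (he : ∀ a, Tendsto (fun i => e i * a) p (𝓝 a)) (a : A) (y : X) :
    Tendsto (fun i => S (e i) (M.l a y)) p (𝓝 (S a y)) := by
  have key : ∀ i, S (e i) (M.l a y) = S (e i * a) y := fun i => by rw [h.1 (e i) a]; rfl
  simpa only [key, Function.comp_def, ContinuousLinearMap.comp_apply,
    ContinuousLinearMap.apply_apply] using
    (((ContinuousLinearMap.apply ℂ ℂ y).comp S).continuous.tendsto a).comp (he a)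

theorem _root_.IsDoubleCentralizer.tendsto_dual_apply_r
    (hX : ∀ x, Tendsto (fun i => M.l (e i) x) p (𝓝 x)) (a : A) (x : X) :
    Tendsto (fun i => S (e i) (M.r a x)) p (𝓝 (T a x)) := by
  have key : ∀ i, S (e i) (M.r a x) = T a (M.l (e i) x) := fun i =>
    congrArg (· x) (h.2.2 a (e i))
  simpa only [key, Function.comp_def] using ((T a).continuous.tendsto x).comp (hX x)

theorem _root_.IsDoubleCentralizer.exists_iotaDC_dual_eq {C : ℝ} [p.NeBot]
    (hC : ∀ i, ‖e i‖ ≤ C) (he : ∀ a, Tendsto (fun i => e i * a) p (𝓝 a))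
    (hM : ∀ x : X, ∃ (a : A) (y : X), x = M.l a y) :
    ∃ φ : X →L[ℂ] ℂ, iotaDC M.dual φ = (S, T) := by
  have hlim : ∀ x, ∃ L, Tendsto (fun i => S (e i) x) p (𝓝 L) := by
    intro x
    obtain ⟨a, y, rfl⟩ := hM x
    exact ⟨_, h.tendsto_dual_apply_l he a y⟩
  choose g hg using hlim
  have hbdd : Bornology.IsBounded (Set.range fun i => S (e i)) := by
    refine isBounded_iff_forall_norm_le.2 ⟨‖S‖ * C, ?_⟩
    rintro _ ⟨i, rfl⟩
    exact (S.le_opNorm _).trans (by gcongr; exact hC i)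
  refine ⟨.ofTendstoOfBoundedRange g _ (tendsto_pi_nhds.2 hg) hbdd, Prod.ext ?_ ?_⟩ <;> ext a x
  · exact tendsto_nhds_unique (hg _) (h.tendsto_dual_apply_l he a x)
  · exact tendsto_nhds_unique (hg _) (h.tendsto_dual_apply_r (M.tendsto_l_apply he hM) a x)

end DoubleCentralizer

end BanachBimodule

/-- If `A` has a bounded approximate identity and `X` is neounital (every `x` is of the form
`a·y·c`), then `ι_{X*} : X* → Δ(X*)` is a topological isomorphism of Banach `A`-bimodules:
it is an injective bimodule homomorphism, bounded below, and onto `Δ(X*)`. -/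
theorem statement12 (M : BanachBimodule A X) (hBAI : HasBAI A)
    (hneo : ∀ x : X, ∃ (a c : A) (y : X), x = M.l a (M.r c y)) :
    Function.Injective (iotaDC M.dual) ∧
    (∀ S T : A →L[ℂ] (X →L[ℂ] ℂ), IsDoubleCentralizer M.dual S T →
      ∃ φ : X →L[ℂ] ℂ, iotaDC M.dual φ = (S, T)) ∧
    (∃ c > 0, ∀ φ : X →L[ℂ] ℂ, c * ‖φ‖ ≤ ‖iotaDC M.dual φ‖) ∧
    (∀ (a : A) (φ : X →L[ℂ] ℂ),
      iotaDC M.dual (M.dual.l a φ) = dcSmulLeft M.dual a (iotaDC M.dual φ) ∧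
      iotaDC M.dual (M.dual.r a φ) = dcSmulRight M.dual (iotaDC M.dual φ) a) := by
  obtain ⟨ι, p, e, hp, ⟨C, hC⟩, he⟩ := hBAI
  have heA : ∀ a, Tendsto (fun i => e i * a) p (𝓝 a) := fun a => (he a).1
  have hM : ∀ x : X, ∃ (a : A) (y : X), x = M.l a y := fun x =>
    let ⟨a, c, y, hx⟩ := hneo x
    ⟨a, M.r c y, hx⟩
  have hbound := M.norm_le_mul_norm_iotaDC_dual hC (M.tendsto_l_apply heA hM)
  have hC0 : 0 ≤ C := (norm_nonneg _).trans (hC p.nonempty_of_neBot.some)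
  refine ⟨?_, fun S T h => h.exists_iotaDC_dual_eq hC heA hM, ?_,
    fun a φ => ⟨M.dual.iotaDC_l a φ, M.dual.iotaDC_r a φ⟩⟩
  · refine (injective_iff_map_eq_zero _).2 fun φ hφ => norm_le_zero_iff.1 ?_
    simpa [hφ] using hbound φ
  · refine ⟨(C + 1)⁻¹, by positivity, fun φ => ?_⟩
    rw [inv_mul_le_iff₀ (by positivity)]
    exact (hbound φ).trans (by gcongr; linarith)
end
end
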